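/- Let C₀ ∈ ℂ^r have Euclidean norm 1, let Φ₀ = (φ₁,…,φ_K) be an orthonormal system in L²(Ω), assume Γ(C₀) is invertible, and set Ψ₀ = π(C₀,Φ₀). If δC = (δc_σ) ∈ ℂ^r and δφ₁,…,δφ_K ∈ L²(Ω) satisfy ⟨δφ_k, φ_m⟩ = 0 for all 1 ≤ k,m ≤ K and Σ_σ δc_σ (Φ₀)_σ + (1/N) Σ_{k=1}^K (∂Ψ₀/∂φ_k)[δφ_k] = 0 in L²(Ω^N), then δC = 0 and δφ_k = 0 for every k. -/

import Mathlib

open MeasureTheory Complex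
open scoped BigOperators ComplexConjugate ENNReal

noncomputable section

abbrev E3 : Type := EuclideanSpace ℝ (Fin 3)

def mOm (Ω : Set E3) : Measure E3 := MeasureTheory.volume.restrict Ω

def mN (Ω : Set E3) (n : ℕ) : Measure (Fin n → E3) := Measure.pi fun _ => mOm Ω

def ip2 (Ω : Set E3) (f g : E3 → ℂ) : ℂ := ∫ x, f x * conj (g x) ∂ (mOm Ω)

def ipN (Ω : Set E3) (n : ℕ) (f g : (Fin n → E3) → ℂ) : ℂ :=
  ∫ x, f x * conj (g x) ∂ (mN Ω n)

def slater (n : ℕ) (φ : Fin n → E3 → ℂ) : (Fin n → E3) → ℂ := fun x =>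
  ((Real.sqrt (Nat.factorial n) : ℂ))⁻¹ * Matrix.det (Matrix.of fun i j : Fin n => φ i (x j))

def SigmaNK (N K : ℕ) : Type := {s : Finset (Fin K) // s.card = N}

instance (N K : ℕ) : Fintype (SigmaNK N K) :=
  inferInstanceAs (Fintype {s : Finset (Fin K) // s.card = N})

instance (N K : ℕ) : DecidableEq (SigmaNK N K) :=
  inferInstanceAs (DecidableEq {s : Finset (Fin K) // s.card = N})

def embOf {N K : ℕ} (σ : SigmaNK N K) : Fin N → Fin K := fun i => σ.1.orderEmbOfFin σ.2 i

def slaterSel (N K : ℕ) (Φ : Fin K → E3 → ℂ) (σ : SigmaNK N K) : (Fin N → E3) → ℂ :=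
  slater N fun i => Φ (embOf σ i)

def mc (N K : ℕ) (C : SigmaNK N K → ℂ) (Φ : Fin K → E3 → ℂ) : (Fin N → E3) → ℂ :=
  fun x => ∑ σ : SigmaNK N K, C σ * slaterSel N K Φ σ x

def posIn {K : ℕ} (s : Finset (Fin K)) (i : Fin K) : ℕ :=
  (Finset.sort s (· ≤ ·)).idxOf i

def gamma1 (N K : ℕ) (C : SigmaNK N K → ℂ) (i j : Fin K) : ℂ :=
  ∑ σ : SigmaNK N K, ∑ τ : SigmaNK N K,
    if i ∈ σ.1 ∧ j ∈ τ.1 ∧ σ.1.erase i = τ.1.erase j then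
      (-1 : ℂ) ^ (posIn σ.1 i + posIn τ.1 j) * C σ * conj (C τ)
    else 0

def sgn2 {K : ℕ} (s : Finset (Fin K)) (i j : Fin K) : ℂ :=
  (if i = j then 0 else if j < i then 1 else -1) *
    (-1 : ℂ) ^ (posIn s i + posIn s j)

def gamma2 (N K : ℕ) (C : SigmaNK N K → ℂ) (i j k l : Fin K) : ℂ :=
  (1 / 2 : ℂ) * ∑ σ : SigmaNK N K, ∑ τ : SigmaNK N K,
    if i ∈ σ.1 ∧ j ∈ σ.1 ∧ k ∈ τ.1 ∧ l ∈ τ.1 ∧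
        (σ.1.erase i).erase j = (τ.1.erase k).erase l then
      sgn2 σ.1 i j * sgn2 τ.1 k l * C σ * conj (C τ)
    else 0

def GammaM (N K : ℕ) (C : SigmaNK N K → ℂ) : Matrix (Fin K) (Fin K) ℂ :=
  Matrix.of fun i j => conj (gamma1 N K C i j)

def OrthoSys (Ω : Set E3) {K : ℕ} (Φ : Fin K → E3 → ℂ) : Prop :=
  (∀ k, MemLp (Φ k) 2 (mOm Ω)) ∧
  ∀ i j, ip2 Ω (Φ i) (Φ j) = if i = j then 1 else 0

def dPhi (Ω : Set E3) (n : ℕ) (Ξ : (Fin n → E3) → ℂ) (φ ζ : E3 → ℂ) :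
    (Fin n → E3) → ℂ := fun x =>
  ∑ i : Fin n, ζ (x i) * ∫ y, Ξ (Function.update x i y) * conj (φ y) ∂ (mOm Ω)

def gammaFun (Ω : Set E3) (N : ℕ) (Ψ : (Fin (N+1) → E3) → ℂ) (f : E3 → ℂ) : E3 → ℂ :=
  fun x => ((N : ℂ) + 1) *
    ∫ y, (∫ Z, Ψ (Fin.cons x Z) * conj (Ψ (Fin.cons y Z)) ∂ (mN Ω N)) * f y ∂ (mOm Ω)

/-!
Pairing the vanishing tangent vector with Slater determinants turns it into determinant
identities, by Löwdin's rule `⟨Φ_f, Φ_g⟩ = det (⟨f a, g b⟩)` and the fact that, for an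
orthonormal `Φ₀`, `(∂Φ_σ/∂φ_k)[ζ]` is `Φ_σ` with its orbital `φ_k` replaced by `ζ`. Since the
`δφ k` are orthogonal to every `φ_m`, testing against `(Φ₀)_τ` isolates `δc_τ`. Testing against
`(Φ₀)_τ` with `φ_l` replaced by `δφ_j`, weighting by `conj (c_τ)` and summing over `τ` gives
`Γ(C₀)ᴴ M = 0` for the Gram matrix `M = (⟨δφ_k, δφ_j⟩)`; invertibility of `Γ(C₀)` forces
`M = 0`, hence `δφ = 0`.
-/

open scoped Matrix

section L2

variable {α : Type*} [MeasurableSpace α] {μ : Measure α}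

theorem MeasureTheory.MemLp.integrable_mul_conj {f g : α → ℂ} (hf : MemLp f 2 μ)
    (hg : MemLp g 2 μ) :
    Integrable (fun x => f x * conj (g x)) μ :=
  hf.integrable_mul (p := 2) (q := 2) hg.star

theorem MeasureTheory.MemLp.ae_eq_zero_of_integral_mul_conj_self {f : α → ℂ} (hf : MemLp f 2 μ)
    (h : ∫ x, f x * conj (f x) ∂μ = 0) : f =ᵐ[μ] 0 := by
  have h' : ∫ x, ‖f x‖ ^ 2 ∂μ = 0 := by
    rw [← Complex.ofReal_inj, ← integral_complex_ofReal, Complex.ofReal_zero, ← h]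
    simp [Complex.mul_conj']
  filter_upwards [(integral_eq_zero_iff_of_nonneg (fun x => by positivity)
    (hf.integrable_norm_pow two_ne_zero)).mp h'] with x hx
  simpa using hx

theorem forall_memLp_update {ι : Type*} [DecidableEq ι] {f : ι → α → ℂ}
    (hf : ∀ i, MemLp (f i) 2 μ) (i : ι) {g : α → ℂ} (hg : MemLp g 2 μ) :
    ∀ j, MemLp (Function.update f i g j) 2 μ :=
  (Function.forall_update_iff f fun _ h => MemLp h 2 μ).mpr ⟨hg, fun j _ => hf j⟩

end L2

instance (Ω : Set E3) : SigmaFinite (mOm Ω) := by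
  unfold mOm; infer_instance

def gram (Ω : Set E3) (n : ℕ) (f g : Fin n → E3 → ℂ) : Matrix (Fin n) (Fin n) ℂ :=
  Matrix.of fun a b => ip2 Ω (f a) (g b)

theorem sum_perm_sign_mul_sign_mul_prod {n : ℕ} {R : Type*} [CommRing R]
    (G : Matrix (Fin n) (Fin n) R) :
    ∑ π : Equiv.Perm (Fin n), ∑ ρ : Equiv.Perm (Fin n),
      (Equiv.Perm.sign π : R) * (Equiv.Perm.sign ρ : R) * ∏ b, G (π b) (ρ b)
      = n.factorial * G.det := by
  have key : ∀ π : Equiv.Perm (Fin n),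
      ∑ ρ : Equiv.Perm (Fin n), (Equiv.Perm.sign ρ : R) * ∏ b, G (π b) (ρ b)
        = Equiv.Perm.sign π * G.det := by
    intro π
    rw [← Matrix.det_transpose G, ← Matrix.det_permute', Matrix.det_apply']
    rfl
  have hsq : ∀ π : Equiv.Perm (Fin n), (Equiv.Perm.sign π : R) * Equiv.Perm.sign π = 1 := by
    intro π
    rw [← Int.cast_mul, ← Units.val_mul, Int.units_mul_self, Units.val_one, Int.cast_one]
  simp_rw [mul_assoc, ← Finset.mul_sum, key, ← mul_assoc, hsq, one_mul, Finset.sum_const,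
    Finset.card_univ, Fintype.card_perm, Fintype.card_fin, nsmul_eq_mul]

theorem slater_mul_conj_slater (n : ℕ) (f g : Fin n → E3 → ℂ) (x : Fin n → E3) :
    slater n f x * conj (slater n g x) =
      ∑ π : Equiv.Perm (Fin n), ∑ ρ : Equiv.Perm (Fin n),
        (n.factorial : ℂ)⁻¹ * (Equiv.Perm.sign π : ℂ) * (Equiv.Perm.sign ρ : ℂ) *
          ∏ b, (f (π b) (x b) * conj (g (ρ b) (x b))) := by
  have hc : ((Real.sqrt n.factorial : ℂ))⁻¹ * conj ((Real.sqrt n.factorial : ℂ))⁻¹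
      = (n.factorial : ℂ)⁻¹ := by
    rw [map_inv₀, Complex.conj_ofReal, ← mul_inv, ← Complex.ofReal_mul,
      Real.mul_self_sqrt (by positivity), Complex.ofReal_natCast]
  rw [slater, slater, Matrix.det_apply', Matrix.det_apply', map_mul, mul_mul_mul_comm, hc,
    map_sum, Finset.sum_mul_sum, Finset.mul_sum]
  refine Finset.sum_congr rfl fun π _ => Finset.mul_sum _ _ _ |>.trans ?_
  refine Finset.sum_congr rfl fun ρ _ => ?_
  simp only [map_mul, map_prod, map_intCast, Matrix.of_apply, Finset.prod_mul_distrib]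
  ring

theorem integrable_slater_mul_conj_slater (Ω : Set E3) (n : ℕ) {f g : Fin n → E3 → ℂ}
    (hf : ∀ a, MemLp (f a) 2 (mOm Ω)) (hg : ∀ a, MemLp (g a) 2 (mOm Ω)) :
    Integrable (fun x => slater n f x * conj (slater n g x)) (mN Ω n) := by
  simp_rw [slater_mul_conj_slater]
  exact integrable_finsetSum _ fun π _ => integrable_finsetSum _ fun ρ _ =>
    (Integrable.fintype_prod fun b => (hf (π b)).integrable_mul_conj (hg (ρ b))).const_mul _

theorem ipN_slater_slater (Ω : Set E3) (n : ℕ) {f g : Fin n → E3 → ℂ}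
    (hf : ∀ a, MemLp (f a) 2 (mOm Ω)) (hg : ∀ a, MemLp (g a) 2 (mOm Ω)) :
    ipN Ω n (slater n f) (slater n g) = (gram Ω n f g).det := by
  have hterm : ∀ π ρ : Equiv.Perm (Fin n),
      Integrable (fun x : Fin n → E3 => ∏ b, (f (π b) (x b) * conj (g (ρ b) (x b)))) (mN Ω n) ∧
      ∫ x, ∏ b, (f (π b) (x b) * conj (g (ρ b) (x b))) ∂(mN Ω n) = ∏ b, gram Ω n f g (π b) (ρ b) :=
    fun π ρ => ⟨Integrable.fintype_prod fun b => (hf (π b)).integrable_mul_conj (hg (ρ b)),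
      integral_fintype_prod_eq_prod (fun b y => f (π b) y * conj (g (ρ b) y))⟩
  have hfac : (n.factorial : ℂ) ≠ 0 := Nat.cast_ne_zero.mpr n.factorial_ne_zero
  rw [ipN, integral_congr_ae (.of_forall (slater_mul_conj_slater n f g)),
    integral_finsetSum _ fun π _ => integrable_finsetSum _ fun ρ _ => (hterm π ρ).1.const_mul _,
    ← inv_mul_cancel_left₀ hfac (gram Ω n f g).det, ← sum_perm_sign_mul_sign_mul_prod,
    Finset.mul_sum]
  refine Finset.sum_congr rfl fun π _ => ?_
  rw [integral_finsetSum _ fun ρ _ => (hterm π ρ).1.const_mul _, Finset.mul_sum]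
  refine Finset.sum_congr rfl fun ρ _ => ?_
  rw [integral_const_mul, (hterm π ρ).2]
  ring

section DerivativeOfSlater

variable (Ω : Set E3) {n : ℕ} {f : Fin n → E3 → ℂ}

theorem slater_update_coord (x : Fin n → E3) (i : Fin n) (y : E3) :
    slater n f (Function.update x i y) = (Real.sqrt n.factorial : ℂ)⁻¹ *
      ∑ a, (Matrix.of fun a b => f a (x b)).adjugate i a * f a y := by
  have hcol : (Matrix.of fun a b => f a (Function.update x i y b)) =
      (Matrix.of fun a b => f a (x b)).updateCol i (fun a => f a y) := by
    ext a b
    rcases eq_or_ne b i with rfl | hb <;> simp [*]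
  rw [slater, hcol, ← Matrix.cramer_apply, Matrix.cramer_eq_adjugate_mulVec]
  rfl

theorem slater_update_orbital (x : Fin n → E3) (a : Fin n) (ζ : E3 → ℂ) :
    slater n (Function.update f a ζ) x = (Real.sqrt n.factorial : ℂ)⁻¹ *
      ∑ i, (Matrix.of fun a b => f a (x b)).adjugate i a * ζ (x i) := by
  have hrow : (Matrix.of fun c b => Function.update f a ζ c (x b)) =
      (Matrix.of fun c b => f c (x b)).updateRow a (fun b => ζ (x b)) := by
    ext c b
    rcases eq_or_ne c a with rfl | hc <;> simp [Matrix.updateRow_apply, *]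
  rw [slater, hrow, ← Matrix.cramer_transpose_apply, Matrix.cramer_eq_adjugate_mulVec,
    ← Matrix.adjugate_transpose]
  rfl

theorem integrable_slater_update_mul_conj (hf : ∀ a, MemLp (f a) 2 (mOm Ω)) {φ : E3 → ℂ}
    (hφ : MemLp φ 2 (mOm Ω)) (x : Fin n → E3) (i : Fin n) :
    Integrable (fun y => slater n f (Function.update x i y) * conj (φ y)) (mOm Ω) := by
  simp_rw [slater_update_coord, mul_assoc, Finset.sum_mul, mul_assoc]
  exact (integrable_finsetSum _ fun a _ =>
    ((hf a).integrable_mul_conj hφ).const_mul _).const_mul _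

theorem integral_slater_update_mul_conj (hf : ∀ a, MemLp (f a) 2 (mOm Ω)) {φ : E3 → ℂ}
    (hφ : MemLp φ 2 (mOm Ω)) (x : Fin n → E3) (i : Fin n) :
    ∫ y, slater n f (Function.update x i y) * conj (φ y) ∂(mOm Ω) =
      (Real.sqrt n.factorial : ℂ)⁻¹ *
        ∑ a, (Matrix.of fun a b => f a (x b)).adjugate i a * ip2 Ω (f a) φ := by
  simp_rw [slater_update_coord, mul_assoc, Finset.sum_mul, mul_assoc]
  rw [integral_const_mul, integral_finsetSum _ fun a _ =>
    ((hf a).integrable_mul_conj hφ).const_mul _]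
  simp_rw [integral_const_mul, ip2]

theorem dPhi_slater (hf : ∀ a, MemLp (f a) 2 (mOm Ω)) {φ : E3 → ℂ} (hφ : MemLp φ 2 (mOm Ω))
    (ζ : E3 → ℂ) (x : Fin n → E3) :
    dPhi Ω n (slater n f) φ ζ x = ∑ a, ip2 Ω (f a) φ * slater n (Function.update f a ζ) x := by
  simp_rw [dPhi, integral_slater_update_mul_conj Ω hf hφ, slater_update_orbital, Finset.mul_sum]
  rw [Finset.sum_comm]
  refine Finset.sum_congr rfl fun a _ => Finset.sum_congr rfl fun i _ => ?_
  ring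

theorem dPhi_finset_sum {ι : Type*} (s : Finset ι) (c : ι → ℂ)
    (Ξ : ι → (Fin n → E3) → ℂ) {φ : E3 → ℂ} (ζ : E3 → ℂ) (x : Fin n → E3)
    (hΞ : ∀ j ∈ s, ∀ i, Integrable (fun y => Ξ j (Function.update x i y) * conj (φ y)) (mOm Ω)) :
    dPhi Ω n (fun x => ∑ j ∈ s, c j * Ξ j x) φ ζ x = ∑ j ∈ s, c j * dPhi Ω n (Ξ j) φ ζ x := by
  have hint : ∀ i, ∫ y, (∑ j ∈ s, c j * Ξ j (Function.update x i y)) * conj (φ y) ∂(mOm Ω) =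
      ∑ j ∈ s, c j * ∫ y, Ξ j (Function.update x i y) * conj (φ y) ∂(mOm Ω) := by
    intro i
    simp_rw [Finset.sum_mul, mul_assoc]
    rw [integral_finsetSum _ fun j hj => (hΞ j hj i).const_mul _]
    simp_rw [integral_const_mul]
  simp_rw [dPhi, hint, Finset.mul_sum]
  rw [Finset.sum_comm]
  refine Finset.sum_congr rfl fun j _ => Finset.sum_congr rfl fun i _ => ?_
  ring

theorem sum_dPhi_mc {N K : ℕ} {Φ : Fin K → E3 → ℂ} (hΦ : OrthoSys Ω Φ)
    (C : SigmaNK N K → ℂ) (ζ : Fin K → E3 → ℂ) (x : Fin N → E3) :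
    ∑ k, dPhi Ω N (mc N K C Φ) (Φ k) (ζ k) x = ∑ σ, C σ * ∑ a,
      slater N (Function.update (fun b => Φ (embOf σ b)) a (ζ (embOf σ a))) x := by
  obtain ⟨hm, ho⟩ := hΦ
  have hsel : ∀ k, dPhi Ω N (mc N K C Φ) (Φ k) (ζ k) x = ∑ σ, C σ * ∑ a,
      (if embOf σ a = k then 1 else 0) *
        slater N (Function.update (fun b => Φ (embOf σ b)) a (ζ k)) x := by
    intro k
    unfold mc
    rw [dPhi_finset_sum Ω _ C (slaterSel N K Φ) (ζ k) x fun σ _ i =>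
      integrable_slater_update_mul_conj Ω (fun a => hm _) (hm k) x i]
    simp_rw [slaterSel, dPhi_slater Ω (fun a => hm _) (hm k), ho]
  simp_rw [hsel, Finset.mul_sum]
  rw [Finset.sum_comm]
  refine Finset.sum_congr rfl fun σ _ => ?_
  rw [Finset.sum_comm]
  simp [ite_mul]

end DerivativeOfSlater

section Subsets

variable {N K : ℕ} (σ : SigmaNK N K)

theorem SigmaNK.val_inj {τ : SigmaNK N K} : σ.1 = τ.1 ↔ σ = τ :=
  Subtype.val_inj

theorem embOf_strictMono : StrictMono (embOf σ) :=
  (σ.1.orderEmbOfFin σ.2).strictMono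

theorem image_embOf : Finset.univ.image (embOf σ) = σ.1 :=
  Finset.image_orderEmbOfFin_univ _ _

theorem posIn_embOf (a : Fin N) : posIn σ.1 (embOf σ a) = a := by
  rw [posIn, embOf, Finset.orderEmbOfFin_apply]
  exact (σ.1.sort_nodup (· ≤ ·)).idxOf_getElem _ _

theorem exists_embOf_eq {k : Fin K} (hk : k ∈ σ.1) : ∃ a, embOf σ a = k := by
  rw [← image_embOf σ] at hk
  simpa using hk

theorem sum_embOf {M : Type*} [AddCommMonoid M] (g : Fin K → M) :
    ∑ a, g (embOf σ a) = ∑ k ∈ σ.1, g k := by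
  rw [← image_embOf σ, Finset.sum_image (embOf_strictMono σ).injective.injOn]

theorem image_embOf_comp_succAbove {n : ℕ} (σ : SigmaNK (n + 1) K) (p : Fin (n + 1)) :
    Finset.univ.image (embOf σ ∘ p.succAbove) = σ.1.erase (embOf σ p) := by
  rw [← Finset.image_image, Fin.image_succAbove_univ, ← image_embOf σ, Finset.compl_singleton,
    Finset.image_erase (embOf_strictMono σ).injective]

end Subsets

theorem Matrix.det_succ_row_single {R : Type*} [CommRing R] {n : ℕ}
    (A : Matrix (Fin (n + 1)) (Fin (n + 1)) R) {p q : Fin (n + 1)} (h : ∀ j ≠ q, A p j = 0) :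
    A.det = (-1) ^ (p + q : ℕ) * A p q * (A.submatrix p.succAbove q.succAbove).det := by
  rw [Matrix.det_succ_row A p, Finset.sum_eq_single q (fun j _ hj => by simp [h j hj])
    (by simp)]

section Gram

variable (Ω : Set E3) {K : ℕ} {Φ : Fin K → E3 → ℂ}

theorem det_gram_of_strictMono (hΦ : OrthoSys Ω Φ) {m : ℕ} {u v : Fin m → Fin K}
    (hu : StrictMono u) (hv : StrictMono v) :
    (gram Ω m (fun a => Φ (u a)) (fun b => Φ (v b))).det =
      if Finset.univ.image u = Finset.univ.image v then 1 else 0 := by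
  split_ifs with h
  · obtain rfl : u = v := (hu.range_inj hv).mp <| by
      simpa using congrArg (fun s : Finset (Fin K) => (s : Set (Fin K))) h
    have hone : gram Ω m (fun a => Φ (u a)) (fun b => Φ (u b)) = 1 := by
      ext a b
      simp [gram, hΦ.2, Matrix.one_apply, hu.injective.eq_iff]
    rw [hone, Matrix.det_one]
  · have hcard : (Finset.univ.image v).card ≤ (Finset.univ.image u).card := by
      rw [Finset.card_image_of_injective _ hu.injective,
        Finset.card_image_of_injective _ hv.injective]
    obtain ⟨e, he, hev⟩ := Finset.not_subset.mp fun hsub =>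
      h (Finset.eq_of_subset_of_card_le hsub hcard)
    obtain ⟨a, -, rfl⟩ := Finset.mem_image.mp he
    refine Matrix.det_eq_zero_of_row_eq_zero a fun b => ?_
    simp only [gram, Matrix.of_apply, hΦ.2]
    exact if_neg fun hab => hev (Finset.mem_image.mpr ⟨b, Finset.mem_univ b, hab.symm⟩)

theorem det_gram_update_left_of_perp {n : ℕ} (u v : Fin n → Fin K) (p : Fin n) {η : E3 → ℂ}
    (hη : ∀ m, ip2 Ω η (Φ m) = 0) :
    (gram Ω n (Function.update (fun a => Φ (u a)) p η) (fun b => Φ (v b))).det = 0 :=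
  Matrix.det_eq_zero_of_row_eq_zero p fun b => by simp [gram, hη]

theorem det_gram_update_update (hΦ : OrthoSys Ω Φ) {n : ℕ} (σ τ : SigmaNK (n + 1) K)
    (p q : Fin (n + 1)) {η : E3 → ℂ} (hη : ∀ m, ip2 Ω η (Φ m) = 0) (ξ : E3 → ℂ) :
    (gram Ω (n + 1) (Function.update (fun a => Φ (embOf σ a)) p η)
        (Function.update (fun b => Φ (embOf τ b)) q ξ)).det =
      (-1) ^ (p + q : ℕ) * ip2 Ω η ξ *
        if σ.1.erase (embOf σ p) = τ.1.erase (embOf τ q) then 1 else 0 := by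
  rw [Matrix.det_succ_row_single (p := p) (q := q) _ fun j hj => by
      simp [gram, Function.update_of_ne hj, hη],
    ← image_embOf_comp_succAbove, ← image_embOf_comp_succAbove,
    ← det_gram_of_strictMono Ω hΦ ((embOf_strictMono σ).comp (Fin.strictMono_succAbove p))
      ((embOf_strictMono τ).comp (Fin.strictMono_succAbove q))]
  congr 2
  · simp [gram]
  · ext a b
    simp [gram]

end Gram

theorem sum_gamma1_mul {N K : ℕ} (C : SigmaNK N K → ℂ) (l : Fin K) (w : Fin K → ℂ) :
    ∑ k, gamma1 N K C k l * w k = ∑ τ : SigmaNK N K, if l ∈ τ.1 then conj (C τ) *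
      ∑ σ, C σ * ∑ a : Fin N, (-1) ^ (a + posIn τ.1 l : ℕ) * w (embOf σ a) *
        (if σ.1.erase (embOf σ a) = τ.1.erase l then 1 else 0) else 0 := by
  simp only [gamma1, Finset.sum_mul]
  rw [Finset.sum_comm, Finset.sum_congr rfl fun σ _ => Finset.sum_comm, Finset.sum_comm]
  refine Finset.sum_congr rfl fun τ _ => ?_
  split_ifs with hl
  swap
  · simp [hl]
  rw [Finset.mul_sum]
  refine Finset.sum_congr rfl fun σ _ => ?_
  set G : Fin K → ℂ := fun k => (-1) ^ (posIn σ.1 k + posIn τ.1 l) * w k *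
    if σ.1.erase k = τ.1.erase l then 1 else 0
  calc _ = ∑ k, if k ∈ σ.1 then conj (C τ) * (C σ * G k) else 0 := by
        refine Finset.sum_congr rfl fun k _ => ?_
        by_cases hk : k ∈ σ.1
        · by_cases he : σ.1.erase k = τ.1.erase l
          · simp only [G, hk, hl, he, and_self, if_true]
            ring
          · simp [G, hk, he]
        · simp [hk]
    _ = conj (C τ) * (C σ * ∑ a, G (embOf σ a)) := by
        rw [Finset.sum_ite_mem, Finset.univ_inter, sum_embOf, Finset.mul_sum, Finset.mul_sum]
    _ = _ := by simp only [G, posIn_embOf]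

theorem conjTranspose_GammaM_mul_eq_zero {N K : ℕ} (C : SigmaNK N K → ℂ)
    (M : Matrix (Fin K) (Fin K) ℂ)
    (h : ∀ (τ : SigmaNK N K) (q : Fin N) (j : Fin K), ∑ σ, C σ * ∑ a : Fin N,
      (-1) ^ (a + q : ℕ) * M (embOf σ a) j *
        (if σ.1.erase (embOf σ a) = τ.1.erase (embOf τ q) then 1 else 0) = 0) :
    (GammaM N K C)ᴴ * M = 0 := by
  ext l j
  simp only [Matrix.mul_apply, GammaM, Matrix.conjTranspose_apply, Matrix.of_apply,
    RCLike.star_def, Complex.conj_conj, sum_gamma1_mul, Matrix.zero_apply]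
  refine Finset.sum_eq_zero fun τ _ => ?_
  split_ifs with hl
  · obtain ⟨q, rfl⟩ := exists_embOf_eq τ hl
    rw [posIn_embOf, h τ q j, mul_zero]
  · rfl

theorem ipN_sum_mul_slater (Ω : Set E3) {n : ℕ} {ι : Type*} [Fintype ι] (c : ι → ℂ)
    {f : ι → Fin n → E3 → ℂ} (hf : ∀ i a, MemLp (f i a) 2 (mOm Ω))
    {g : Fin n → E3 → ℂ} (hg : ∀ a, MemLp (g a) 2 (mOm Ω)) :
    ipN Ω n (fun x => ∑ i, c i * slater n (f i) x) (slater n g) =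
      ∑ i, c i * (gram Ω n (f i) g).det := by
  simp_rw [ipN, Finset.sum_mul, mul_assoc]
  rw [integral_finsetSum _ fun i _ =>
    (integrable_slater_mul_conj_slater Ω n (hf i) hg).const_mul _]
  refine Finset.sum_congr rfl fun i _ => ?_
  rw [integral_const_mul, ← ipN_slater_slater Ω n (hf i) hg, ipN]

theorem pairing_eq_zero_of_tangent_eq_zero (Ω : Set E3) {N K : ℕ} {Φ : Fin K → E3 → ℂ}
    (hΦ : OrthoSys Ω Φ) (C δC : SigmaNK N K → ℂ) {δφ : Fin K → E3 → ℂ}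
    (hδφ : ∀ k, MemLp (δφ k) 2 (mOm Ω))
    (heq : (fun x => (∑ σ, δC σ * slaterSel N K Φ σ x) +
        (1 / (N : ℂ)) * ∑ k, dPhi Ω N (mc N K C Φ) (Φ k) (δφ k) x) =ᵐ[mN Ω N] 0)
    (g : Fin N → E3 → ℂ) (hg : ∀ a, MemLp (g a) 2 (mOm Ω)) :
    ∑ σ, δC σ * (gram Ω N (fun a => Φ (embOf σ a)) g).det + (1 / (N : ℂ)) * ∑ σ, C σ * ∑ a,
      (gram Ω N (Function.update (fun b => Φ (embOf σ b)) a (δφ (embOf σ a))) g).det = 0 := by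
  -- the tangent vector as one combination of Slater determinants, indexed by `σ` (the `δC`
  -- part) and by pairs `(σ, a)` (orbital `a` of `Φ_σ` replaced by its variation)
  let c : SigmaNK N K ⊕ SigmaNK N K × Fin N → ℂ := Sum.elim δC fun p => 1 / (N : ℂ) * C p.1
  let f : SigmaNK N K ⊕ SigmaNK N K × Fin N → Fin N → E3 → ℂ := Sum.elim
    (fun σ a => Φ (embOf σ a)) fun p => Function.update (fun b => Φ (embOf p.1 b)) p.2
      (δφ (embOf p.1 p.2))
  have hf : ∀ i a, MemLp (f i a) 2 (mOm Ω) := by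
    rintro (σ | ⟨σ, p⟩)
    exacts [fun a => hΦ.1 _, forall_memLp_update (fun a => hΦ.1 _) p (hδφ _)]
  have hrepr : (fun x => (∑ σ, δC σ * slaterSel N K Φ σ x) +
      (1 / (N : ℂ)) * ∑ k, dPhi Ω N (mc N K C Φ) (Φ k) (δφ k) x) =
      fun x => ∑ i, c i * slater N (f i) x := by
    funext x
    simp [sum_dPhi_mc Ω hΦ, Fintype.sum_sum_type, Fintype.sum_prod_type, Finset.mul_sum,
      slaterSel, c, f, mul_assoc]
  have hzero : ipN Ω N (fun x => ∑ i, c i * slater N (f i) x) (slater N g) = 0 := by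
    rw [← hrepr]
    refine integral_eq_zero_of_ae (heq.mono fun x hx => ?_)
    simp only [Pi.zero_apply] at hx ⊢
    rw [hx, zero_mul]
  rw [ipN_sum_mul_slater Ω c hf hg] at hzero
  simpa [Fintype.sum_sum_type, Fintype.sum_prod_type, Finset.mul_sum, c, f, mul_assoc]
    using hzero

theorem dpi_injective_general (Ω : Set E3) (N K : ℕ)
    (hN : 1 ≤ N)
    (C0 : SigmaNK N K → ℂ)
    (Φ0 : Fin K → E3 → ℂ) (hΦ0 : OrthoSys Ω Φ0)
    (hG : IsUnit (GammaM N K C0))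
    (δC : SigmaNK N K → ℂ) (δφ : Fin K → E3 → ℂ)
    (hδφ : ∀ k, MemLp (δφ k) 2 (mOm Ω))
    (hperp : ∀ k m : Fin K, ip2 Ω (δφ k) (Φ0 m) = 0)
    (heq : (fun x => (∑ σ : SigmaNK N K, δC σ * slaterSel N K Φ0 σ x) +
        (1 / (N : ℂ)) * ∑ k : Fin K, dPhi Ω N (mc N K C0 Φ0) (Φ0 k) (δφ k) x)
        =ᵐ[mN Ω N] 0) :
    δC = 0 ∧ ∀ k : Fin K, δφ k =ᵐ[mOm Ω] 0 := by
  obtain ⟨n, rfl⟩ : ∃ n, N = n + 1 := ⟨N - 1, by omega⟩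
  have hpair := pairing_eq_zero_of_tangent_eq_zero Ω hΦ0 C0 δC hδφ heq
  have hδC : δC = 0 := by
    funext τ
    simpa [det_gram_of_strictMono Ω hΦ0 (embOf_strictMono _) (embOf_strictMono τ), image_embOf,
      det_gram_update_left_of_perp Ω _ _ _ (hperp _), SigmaNK.val_inj]
      using hpair _ fun a => hΦ0.1 (embOf τ a)
  have hΓM := conjTranspose_GammaM_mul_eq_zero C0 (.of fun k j => ip2 Ω (δφ k) (δφ j))
    fun τ q j => by
      simpa [hδC, det_gram_update_update Ω hΦ0 _ _ _ _ (hperp _), Nat.cast_add_one_ne_zero]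
        using hpair _ (forall_memLp_update (fun b => hΦ0.1 (embOf τ b)) q (hδφ j))
  have hM := hG.star.mul_right_eq_zero.mp hΓM
  exact ⟨hδC, fun k => (hδφ k).ae_eq_zero_of_integral_mul_conj_self (congrFun₂ hM k k)⟩

/-- under the full-rank assumption the differential of π at (C₀,Φ₀) is
injective on allowed variations: if the tangent vector vanishes then δC = 0 and δφ = 0. -/
theorem dpi_injective (Ω : Set E3) (hΩ : IsOpen Ω) (N K : ℕ)
    (hN : 1 ≤ N) (hNK : N ≤ K)
    (C0 : SigmaNK N K → ℂ) (hC0 : ∑ σ : SigmaNK N K, ‖C0 σ‖ ^ 2 = 1)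
    (Φ0 : Fin K → E3 → ℂ) (hΦ0 : OrthoSys Ω Φ0)
    (hG : IsUnit (GammaM N K C0))
    (δC : SigmaNK N K → ℂ) (δφ : Fin K → E3 → ℂ)
    (hδφ : ∀ k, MemLp (δφ k) 2 (mOm Ω))
    (hperp : ∀ k m : Fin K, ip2 Ω (δφ k) (Φ0 m) = 0)
    (heq : (fun x => (∑ σ : SigmaNK N K, δC σ * slaterSel N K Φ0 σ x) +
        (1 / (N : ℂ)) * ∑ k : Fin K, dPhi Ω N (mc N K C0 Φ0) (Φ0 k) (δφ k) x)
        =ᵐ[mN Ω N] 0) :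
    δC = 0 ∧ ∀ k : Fin K, δφ k =ᵐ[mOm Ω] 0 :=
  dpi_injective_general Ω N K hN C0 Φ0 hΦ0 hG δC δφ hδφ hperp heq
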